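/- A minimal valid function π is a facet if and only if there is no nonzero function π̄ : ℝ → ℝ with π̄(0) = 0, π̄(f) = 0, Δπ̄(x,y) = 0 for all (x,y) ∈ E(π), π̄ periodic modulo 1, such that π + π̄ is minimal valid. -/

import Mathlib

/-- Minimal valid function for the Gomory–Johnson infinite group problem with parameter `f`. -/
def MinimalValid (f : ℝ) (π : ℝ → ℝ) : Prop :=
  (∀ x, 0 ≤ π x) ∧ π 0 = 0 ∧ (∀ x y, π (x + y) ≤ π x + π y) ∧
  (∀ x, π (x + 1) = π x) ∧ (∀ x, π x + π (f - x) = 1)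

/-- Additivity domain. -/
def Eset (π : ℝ → ℝ) : Set (ℝ × ℝ) := {p | π p.1 + π p.2 = π (p.1 + p.2)}

/-- `P(π)`: finite-support ℤ₊-valued functions with ∑ r·y(r) ≡ f (mod 1) and ∑ π(r)·y(r) = 1. -/
def Pset (f : ℝ) (π : ℝ → ℝ) : Set (ℝ →₀ ℕ) :=
  {y | (∃ z : ℤ, (y.sum fun r n => r * (n : ℝ)) = f + z) ∧
       (y.sum fun r n => π r * (n : ℝ)) = 1}

/-- Valid function. -/
def ValidFn (f : ℝ) (π : ℝ → ℝ) : Prop :=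
  (∀ x, 0 ≤ π x) ∧
  ∀ y : ℝ →₀ ℕ, (∃ z : ℤ, (y.sum fun r n => r * (n : ℝ)) = f + z) →
    1 ≤ (y.sum fun r n => π r * (n : ℝ))

/-!
The admissible perturbations `π̄` are exactly the differences `π' - π` with `π' ≠ π` minimal valid
and additive on `E(π)`, so it suffices that, for minimal valid `π'`, the inclusion
`P(π) ⊆ P(π')` is equivalent to `π'` being additive on `E(π)`. An element of `P(π)` is a multiset
of points whose sum is `≡ f` and on which `π` is tight; by subadditivity every partial sum is then
tight as well, so additivity on `E(π)` carries over along the multiset. Conversely, for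
`(x, y) ∈ E(π)` the multiset `{x, y, f - (x + y)}` lies in `P(π)`, and symmetry of `π'` turns
membership in `P(π')` into `π' x + π' y = π' (x + y)`.
-/

lemma Finsupp.sum_mul_natCast_eq_sum_map_toMultiset (g : ℝ → ℝ) (y : ℝ →₀ ℕ) :
    (y.sum fun r n => g r * (n : ℝ)) = (y.toMultiset.map g).sum := by
  rw [Finsupp.toMultiset_map, Finsupp.sum_toMultiset,
    Finsupp.sum_mapDomain_index (h := fun (a : ℝ) (n : ℕ) => n • a) zero_nsmul add_nsmul]
  simp only [nsmul_eq_mul, mul_comm]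

lemma mem_Pset_iff {f : ℝ} {π : ℝ → ℝ} {y : ℝ →₀ ℕ} :
    y ∈ Pset f π ↔
      (∃ z : ℤ, y.toMultiset.sum = f + z) ∧ (y.toMultiset.map π).sum = 1 := by
  simp only [Pset, Set.mem_ofPred_eq, Finsupp.sum_mul_natCast_eq_sum_map_toMultiset,
    Multiset.map_id']

lemma toFinsupp_mem_Pset_iff {f : ℝ} {π : ℝ → ℝ} {m : Multiset ℝ} :
    Multiset.toFinsupp m ∈ Pset f π ↔ (∃ z : ℤ, m.sum = f + z) ∧ (m.map π).sum = 1 := by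
  rw [mem_Pset_iff, Multiset.toFinsupp_toMultiset]

lemma map_multiset_sum_of_tight {α β : Type*} [AddCommMonoid α] [AddCommMonoid β]
    {π : α → ℝ} {φ : α → β} (h0 : π 0 ≤ 0) (hsub : ∀ x y, π (x + y) ≤ π x + π y)
    (hφ0 : φ 0 = 0) (hφ : ∀ x y, π x + π y = π (x + y) → φ x + φ y = φ (x + y))
    (m : Multiset α) (htight : π m.sum = (m.map π).sum) :
    φ m.sum = (m.map φ).sum := by
  induction m using Multiset.induction with
  | empty => simpa using hφ0
  | cons a m ih =>
    simp only [Multiset.sum_cons, Multiset.map_cons] at htight ⊢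
    have hsplit := hsub a m.sum
    have hrest := Multiset.le_sum_of_subadditive π h0 hsub m
    rw [← hφ a m.sum (by linarith), ih (by linarith)]

namespace MinimalValid

variable {f : ℝ} {π : ℝ → ℝ}

lemma apply_f (hπ : MinimalValid f π) : π f = 1 := by
  have := hπ.2.2.2.2 0
  rwa [hπ.2.1, sub_zero, zero_add] at this

lemma Pset_subset_Pset_add (hπ : MinimalValid f π) {πb : ℝ → ℝ} (hb0 : πb 0 = 0)
    (hbf : πb f = 0) (hbE : ∀ p ∈ Eset π, πb p.1 + πb p.2 = πb (p.1 + p.2))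
    (hbper : ∀ x, πb (x + 1) = πb x) :
    Pset f π ⊆ Pset f (fun x => π x + πb x) := by
  intro y hy
  rw [mem_Pset_iff] at hy ⊢
  obtain ⟨⟨z, hz⟩, hπy⟩ := hy
  set m := y.toMultiset
  have hπz : π (f + z) = π f := by simpa using Function.Periodic.int_mul hπ.2.2.2.1 z f
  have hbz : πb (f + z) = πb f := by simpa using Function.Periodic.int_mul hbper z f
  have htight : π m.sum = (m.map π).sum := by
    rw [hz, hπz, hπ.apply_f, hπy]
  have hbm : πb m.sum = (m.map πb).sum :=
    map_multiset_sum_of_tight hπ.2.1.le hπ.2.2.1 hb0 (fun x y h => hbE (x, y) h) m htight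
  have hbsum : (m.map πb).sum = 0 := by
    rw [← hbm, hz, hbz, hbf]
  refine ⟨⟨z, hz⟩, ?_⟩
  rw [Multiset.sum_map_add, hπy, hbsum, add_zero]

lemma additive_on_Eset_of_Pset_subset (hπ : MinimalValid f π) {π' : ℝ → ℝ}
    (hπ' : MinimalValid f π') (hP : Pset f π ⊆ Pset f π') :
    ∀ p ∈ Eset π, π' p.1 + π' p.2 = π' (p.1 + p.2) := by
  rintro ⟨x, y⟩ hxy
  simp only [Eset, Set.mem_ofPred_eq] at hxy
  have hsum : ∀ g : ℝ → ℝ,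
      (({x, y, f - (x + y)} : Multiset ℝ).map g).sum = g x + g y + g (f - (x + y)) := by
    intro g
    simp only [Multiset.insert_eq_cons, Multiset.map_cons, Multiset.map_singleton,
      Multiset.sum_cons, Multiset.sum_singleton, add_assoc]
  have hmem : Multiset.toFinsupp {x, y, f - (x + y)} ∈ Pset f π := by
    refine toFinsupp_mem_Pset_iff.mpr ⟨⟨0, ?_⟩, ?_⟩
    · rw [← Multiset.map_id' {x, y, f - (x + y)}, hsum, Int.cast_zero]
      ring
    · rw [hsum]
      linarith [hπ.2.2.2.2 (x + y)]
  obtain ⟨-, hπ'sum⟩ := toFinsupp_mem_Pset_iff.mp (hP hmem)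
  rw [hsum] at hπ'sum
  linarith [hπ'.2.2.2.2 (x + y)]

end MinimalValid

theorem facet_iff_no_perturbation_general (f : ℝ)
    (π : ℝ → ℝ) (hπ : MinimalValid f π) :
    (∀ π' : ℝ → ℝ, MinimalValid f π' → Pset f π ⊆ Pset f π' → π' = π) ↔
    ¬ ∃ πb : ℝ → ℝ, πb ≠ 0 ∧ πb 0 = 0 ∧ πb f = 0 ∧
        (∀ p ∈ Eset π, πb p.1 + πb p.2 = πb (p.1 + p.2)) ∧
        (∀ x, πb (x + 1) = πb x) ∧
        MinimalValid f (fun x => π x + πb x) := by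
  constructor
  · rintro hfacet ⟨πb, hbne, hb0, hbf, hbE, hbper, hmin⟩
    have heq := hfacet _ hmin (hπ.Pset_subset_Pset_add hb0 hbf hbE hbper)
    exact hbne (funext fun x => by simpa using congrFun heq x)
  · intro hno π' hπ' hP
    by_contra hne
    refine hno ⟨fun x => π' x - π x, sub_ne_zero.mpr hne, ?_, ?_, ?_, ?_,
      by simpa only [add_sub_cancel] using hπ'⟩
    · simp [hπ.2.1, hπ'.2.1]
    · simp [hπ.apply_f, hπ'.apply_f]
    · intro p hp
      have := hπ.additive_on_Eset_of_Pset_subset hπ' hP p hp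
      simp only [Eset, Set.mem_ofPred_eq] at hp
      linarith
    · intro x
      simp only [hπ.2.2.2.1, hπ'.2.2.2.1]

theorem facet_iff_no_perturbation (f : ℝ) (hf : ∀ z : ℤ, f ≠ z)
    (π : ℝ → ℝ) (hπ : MinimalValid f π) :
    (∀ π' : ℝ → ℝ, MinimalValid f π' → Pset f π ⊆ Pset f π' → π' = π) ↔
    ¬ ∃ πb : ℝ → ℝ, πb ≠ 0 ∧ πb 0 = 0 ∧ πb f = 0 ∧
        (∀ p ∈ Eset π, πb p.1 + πb p.2 = πb (p.1 + p.2)) ∧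
        (∀ x, πb (x + 1) = πb x) ∧
        MinimalValid f (fun x => π x + πb x) :=
  facet_iff_no_perturbation_general f π hπ
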